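/- arXiv:2311.05738 — 3 statements merged into one kernel-verified Lean document; each statement's English description precedes it below -/
import Mathlib

section
/- (Derivative formula for the optimal control) Let 0 ≤ τ < T and suppose u is differentiable on [τ,T], S(t) > 0, I(t) > 0 for t ∈ [τ,T], and the stationarity condition λ·c'(u(t)) + β·S(t)·I(t)·(p₁(t) − p₂(t)) = 0 holds for all t ∈ [τ,T]. Then for every t ∈ [τ,T], u'(t) = β·γ·S(t)·I(t)·p₁(t) / (λ·c''(u(t))); in particular, if p₁(t) < 0 for all t ∈ [τ,T], then u'(t) < 0 for all t ∈ [τ,T]. -/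
/-!
Along the state and adjoint equations the switching function `S I (p₁ - p₂)` has derivative
`-γ S I p₁`: all the terms carrying the control cancel. Differentiating the stationarity
condition `λ c'(u) + β S I (p₁ - p₂) = 0` along `[τ, T]` therefore gives
`λ c''(u) u' = β γ S I p₁`, and `c'' > 0` lets one solve for `u'`.
-/

open Set

theorem HasDerivAt.eq_zero_of_forall_mem_eq {𝕜 F : Type*} [NontriviallyNormedField 𝕜]
    [NormedAddCommGroup F] [NormedSpace 𝕜 F] {f : 𝕜 → F} {f' a : F} {s : Set 𝕜} {x : 𝕜}
    (hf : HasDerivAt f f' x) (hs : UniqueDiffWithinAt 𝕜 s x) (hx : x ∈ s)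
    (hconst : ∀ y ∈ s, f y = a) : f' = 0 :=
  hs.eq_deriv s hf.hasDerivWithinAt ((hasDerivWithinAt_const x s a).congr_of_mem hconst hx)

theorem ContDiffOn.hasDerivAt_deriv {f : ℝ → ℝ} {V : Set ℝ} {x : ℝ}
    (hf : ContDiffOn ℝ 2 f V) (hV : IsOpen V) (hx : x ∈ V) :
    HasDerivAt (deriv f) (deriv (deriv f) x) x :=
  (((hf.deriv_of_isOpen (m := 1) hV (by norm_num)).differentiableOn one_ne_zero).differentiableAt
    (hV.mem_nhds hx)).hasDerivAt

section SIR

variable {β γ k : ℝ} {S I p₁ p₂ : ℝ → ℝ} {t : ℝ}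

/-- Here `k` stands for the transmission factor `1 - u t`. -/
theorem hasDerivAt_switchingFunction
    (hS : HasDerivAt S (-(β * k * S t * I t)) t)
    (hI : HasDerivAt I (β * k * S t * I t - γ * I t) t)
    (hp₁ : HasDerivAt p₁ (-(β * (p₂ t - p₁ t) * k * I t)) t)
    (hp₂ : HasDerivAt p₂ (-(β * (p₂ t - p₁ t) * k * S t) + γ * p₂ t) t) :
    HasDerivAt (fun s => S s * I s * (p₁ s - p₂ s)) (-(γ * S t * I t * p₁ t)) t :=
  ((hS.mul hI).mul (hp₁.sub hp₂)).congr_deriv (by simp only [Pi.mul_apply, Pi.sub_apply]; ring)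

theorem mul_deriv_eq_of_stationary {lam g' : ℝ} {g u : ℝ → ℝ} {s : Set ℝ}
    (hg : HasDerivAt g g' (u t)) (hu : DifferentiableAt ℝ u t)
    (hS : HasDerivAt S (-(β * k * S t * I t)) t)
    (hI : HasDerivAt I (β * k * S t * I t - γ * I t) t)
    (hp₁ : HasDerivAt p₁ (-(β * (p₂ t - p₁ t) * k * I t)) t)
    (hp₂ : HasDerivAt p₂ (-(β * (p₂ t - p₁ t) * k * S t) + γ * p₂ t) t)
    (hs : UniqueDiffWithinAt ℝ s t) (ht : t ∈ s)
    (hstat : ∀ x ∈ s, lam * g (u x) + β * S x * I x * (p₁ x - p₂ x) = 0) :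
    lam * g' * deriv u t = β * γ * S t * I t * p₁ t := by
  have hderiv := ((hg.comp t hu.hasDerivAt).const_mul lam).add
    ((hasDerivAt_switchingFunction hS hI hp₁ hp₂).const_mul β)
  have hzero := hderiv.eq_zero_of_forall_mem_eq (a := 0) hs ht fun x hx => by
    simp only [Pi.add_apply, Function.comp_apply, ← hstat x hx]
    ring
  linarith

end SIR

theorem optimal_control_derivative_formula_general
    (T β γ lam : ℝ) (hβ : 0 < β) (hγ : 0 < γ) (hlam : 0 < lam)
    (c : ℝ → ℝ) (V : Set ℝ) (hV : IsOpen V) (hV01 : Set.Ico (0:ℝ) 1 ⊆ V)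
    (hc : ContDiffOn ℝ 2 c V)
    (hc'' : ∀ v ∈ V, 0 < deriv (deriv c) v)
    (u S I : ℝ → ℝ)
    (hu_range : ∀ t ∈ Set.Icc 0 T, 0 ≤ u t ∧ u t < 1)
    (hS : ∀ t ∈ Set.Icc 0 T, HasDerivAt S (-(β * (1 - u t) * S t * I t)) t)
    (hI : ∀ t ∈ Set.Icc 0 T, HasDerivAt I (β * (1 - u t) * S t * I t - γ * I t) t)
    (p₁ p₂ : ℝ → ℝ)
    (hp₁ : ∀ t ∈ Set.Icc 0 T,
      HasDerivAt p₁ (-(β * (p₂ t - p₁ t) * (1 - u t) * I t)) t)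
    (hp₂ : ∀ t ∈ Set.Icc 0 T,
      HasDerivAt p₂ (-(β * (p₂ t - p₁ t) * (1 - u t) * S t) + γ * p₂ t) t)
    (τ : ℝ) (hτ0 : 0 ≤ τ) (hτT : τ < T)
    (hu_diff : ∀ t ∈ Set.Icc τ T, DifferentiableAt ℝ u t)
    (hSpos : ∀ t ∈ Set.Icc τ T, 0 < S t)
    (hIpos : ∀ t ∈ Set.Icc τ T, 0 < I t)
    (hstat : ∀ t ∈ Set.Icc τ T,
      lam * deriv c (u t) + β * S t * I t * (p₁ t - p₂ t) = 0) :
    (∀ t ∈ Set.Icc τ T,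
        deriv u t = β * γ * S t * I t * p₁ t / (lam * deriv (deriv c) (u t))) ∧
      ((∀ t ∈ Set.Icc τ T, p₁ t < 0) → ∀ t ∈ Set.Icc τ T, deriv u t < 0) := by
  have hcurv : ∀ t ∈ Icc τ T, 0 < lam * deriv (deriv c) (u t) := fun t ht => by
    have ht0 : t ∈ Icc 0 T := ⟨hτ0.trans ht.1, ht.2⟩
    exact mul_pos hlam (hc'' _ (hV01 (hu_range t ht0)))
  have hformula : ∀ t ∈ Icc τ T,
      deriv u t = β * γ * S t * I t * p₁ t / (lam * deriv (deriv c) (u t)) := by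
    intro t ht
    have ht0 : t ∈ Icc 0 T := ⟨hτ0.trans ht.1, ht.2⟩
    rw [eq_div_iff (hcurv t ht).ne', mul_comm]
    exact mul_deriv_eq_of_stationary (hc.hasDerivAt_deriv hV (hV01 (hu_range t ht0)))
      (hu_diff t ht) (hS t ht0) (hI t ht0) (hp₁ t ht0) (hp₂ t ht0)
      (uniqueDiffOn_Icc hτT t ht) ht hstat
  refine ⟨hformula, fun hp₁neg t ht => ?_⟩
  rw [hformula t ht]
  have hSI : 0 < β * γ * S t * I t := by
    have := hSpos t ht; have := hIpos t ht; positivity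
  exact div_neg_of_neg_of_pos (mul_neg_of_pos_of_neg hSI (hp₁neg t ht)) (hcurv t ht)

/-- (Derivative formula for the optimal control) Under the stationarity condition
`λ·c'(u(t)) + β·S(t)·I(t)·(p₁(t) − p₂(t)) = 0` on `[τ,T]`, one has
`u'(t) = β·γ·S(t)·I(t)·p₁(t) / (λ·c''(u(t)))`; in particular if `p₁ < 0` on `[τ,T]`
then `u' < 0` on `[τ,T]`. -/
theorem optimal_control_derivative_formula
    (T β γ lam : ℝ) (hT : 0 < T) (hβ : 0 < β) (hγ : 0 < γ) (hlam : 0 < lam)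
    (c : ℝ → ℝ) (V : Set ℝ) (hV : IsOpen V) (hV01 : Set.Ico (0:ℝ) 1 ⊆ V)
    (hc : ContDiffOn ℝ 2 c V)
    (hc'' : ∀ v ∈ V, 0 < deriv (deriv c) v)
    (u S I R : ℝ → ℝ)
    (hu_range : ∀ t ∈ Set.Icc 0 T, 0 ≤ u t ∧ u t < 1)
    (hS : ∀ t ∈ Set.Icc 0 T, HasDerivAt S (-(β * (1 - u t) * S t * I t)) t)
    (hI : ∀ t ∈ Set.Icc 0 T, HasDerivAt I (β * (1 - u t) * S t * I t - γ * I t) t)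
    (hR : ∀ t ∈ Set.Icc 0 T, HasDerivAt R (γ * I t) t)
    (p₁ p₂ : ℝ → ℝ)
    (hp₁ : ∀ t ∈ Set.Icc 0 T,
      HasDerivAt p₁ (-(β * (p₂ t - p₁ t) * (1 - u t) * I t)) t)
    (hp₂ : ∀ t ∈ Set.Icc 0 T,
      HasDerivAt p₂ (-(β * (p₂ t - p₁ t) * (1 - u t) * S t) + γ * p₂ t) t)
    (τ : ℝ) (hτ0 : 0 ≤ τ) (hτT : τ < T)
    (hu_diff : ∀ t ∈ Set.Icc τ T, DifferentiableAt ℝ u t)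
    (hSpos : ∀ t ∈ Set.Icc τ T, 0 < S t)
    (hIpos : ∀ t ∈ Set.Icc τ T, 0 < I t)
    (hstat : ∀ t ∈ Set.Icc τ T,
      lam * deriv c (u t) + β * S t * I t * (p₁ t - p₂ t) = 0) :
    (∀ t ∈ Set.Icc τ T,
        deriv u t = β * γ * S t * I t * p₁ t / (lam * deriv (deriv c) (u t))) ∧
      ((∀ t ∈ Set.Icc τ T, p₁ t < 0) → ∀ t ∈ Set.Icc τ T, deriv u t < 0) :=
  optimal_control_derivative_formula_general T β γ lam hβ hγ hlam c V hV hV01 hc hc'' u S I hu_range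
    hS hI p₁ p₂ hp₁ hp₂ τ hτ0 hτT hu_diff hSpos hIpos hstat
end

section
/- (Theorem 3.1) There exists τ ∈ [0,T) such that u is strictly decreasing on [τ,T]: for all τ ≤ t₁ < t₂ ≤ T one has u(t₂) < u(t₁). Consequently u'(t) ≤ 0 wherever u is differentiable on [τ,T]. -/
/-!
Near `T` the adjoint `p₁` is close to `p₁ T = -1 < 0`, and `u > 0` (at `T` the KKT condition
with `u T = 0` would force `q T = -β S I < 0`), so the complementary slackness gives `q = 0` and
`λ c'(u) = ψ := β S I (p₂ - p₁)`. Along the state and adjoint equations `ψ' = β γ S I p₁`, which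
is negative there since `S, I > 0`. Hence `ψ` decreases, and so does `u` because `c'` is strictly
increasing on `[0, 1)`.
-/

open Set Filter Topology

/-- `x exp (-∫ f)` is constant. -/
theorem pos_of_hasDerivAt_mul_self {a b : ℝ} {f x : ℝ → ℝ} (hab : a ≤ b)
    (hf : ContinuousOn f (Icc a b)) (hx : ∀ t ∈ Icc a b, HasDerivAt x (f t * x t) t)
    (hxa : 0 < x a) : ∀ t ∈ Icc a b, 0 < x t := by
  set g : ℝ → ℝ := IccExtend hab ((Icc a b).domRestrict f)
  have hg : Continuous g := hf.domRestrict.Icc_extend'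
  have hgf : ∀ t ∈ Icc a b, g t = f t := fun t ht => IccExtend_of_mem hab _ ht
  set F : ℝ → ℝ := fun t => ∫ s in a..t, g s
  have hF : ∀ t, HasDerivAt F (g t) t := fun t => (hg.integral_hasStrictDerivAt a t).hasDerivAt
  set h : ℝ → ℝ := fun t => x t * Real.exp (-F t)
  have hh : ∀ t ∈ Icc a b, HasDerivAt h 0 t := fun t ht =>
    ((hx t ht).mul (hF t).neg.exp).congr_deriv (by rw [hgf t ht]; ring)
  have hconst : ∀ t ∈ Icc a b, h t = h a :=
    constant_of_has_deriv_right_zero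
      (fun t ht => (hh t ht).continuousAt.continuousWithinAt)
      (fun t ht => (hh t (Ico_subset_Icc_self ht)).hasDerivWithinAt)
  intro t ht
  have hta : x t * Real.exp (-F t) = x a := by
    simpa [h, F] using hconst t ht
  exact pos_of_mul_pos_left (hta ▸ hxa) (Real.exp_pos _).le

theorem strictMonoOn_deriv_of_deriv_deriv_pos {c : ℝ → ℝ} {V s : Set ℝ} (hV : IsOpen V)
    (hs : Convex ℝ s) (hsV : s ⊆ V) (hc : ContDiffOn ℝ 2 c V)
    (hc'' : ∀ v ∈ V, 0 < deriv (deriv c) v) : StrictMonoOn (deriv c) s :=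
  strictMonoOn_of_deriv_pos hs ((hc.continuousOn_deriv_of_isOpen hV (by norm_num)).mono hsV)
    fun v hv => hc'' v (hsV (interior_subset hv))

theorem StrictMonoOn.strictAntiOn_of_comp {α β γ : Type*} [LinearOrder α] [LinearOrder β]
    [Preorder γ] {g : β → γ} {u : α → β} {s : Set β} {J : Set α} (hg : StrictMonoOn g s)
    (hu : MapsTo u J s) (hgu : StrictAntiOn (g ∘ u) J) : StrictAntiOn u J :=
  fun _ ha _ hb hab => (hg.lt_iff_lt (hu hb) (hu ha)).mp (hgu ha hb hab)

theorem deriv_nonpos_of_antitoneOn_Icc {u : ℝ → ℝ} {a b t : ℝ} (hab : a < b)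
    (hu : AntitoneOn u (Icc a b)) (ht : t ∈ Icc a b) (hd : DifferentiableAt ℝ u t) :
    deriv u t ≤ 0 :=
  hd.derivWithin (uniqueDiffOn_Icc hab t ht) ▸ hu.derivWithin_nonpos

theorem hasDerivAt_switching {β γ t : ℝ} {u S I p₁ p₂ : ℝ → ℝ}
    (hS : HasDerivAt S (-(β * (1 - u t) * S t * I t)) t)
    (hI : HasDerivAt I (β * (1 - u t) * S t * I t - γ * I t) t)
    (hp₁ : HasDerivAt p₁ (-(β * (p₂ t - p₁ t) * (1 - u t) * I t)) t)
    (hp₂ : HasDerivAt p₂ (-(β * (p₂ t - p₁ t) * (1 - u t) * S t) + γ * p₂ t) t) :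
    HasDerivAt (fun t => β * S t * I t * (p₂ t - p₁ t)) (β * γ * S t * I t * p₁ t) t :=
  (((hS.const_mul β).mul hI).mul (hp₂.sub hp₁)).congr_deriv
    (by simp only [Pi.mul_apply, Pi.sub_apply]; ring)

theorem strictAntiOn_switching {β γ : ℝ} {J : Set ℝ} {u S I p₁ p₂ : ℝ → ℝ} (hβ : 0 < β)
    (hγ : 0 < γ) (hJ : Convex ℝ J)
    (hS : ∀ t ∈ J, HasDerivAt S (-(β * (1 - u t) * S t * I t)) t)
    (hI : ∀ t ∈ J, HasDerivAt I (β * (1 - u t) * S t * I t - γ * I t) t)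
    (hp₁ : ∀ t ∈ J, HasDerivAt p₁ (-(β * (p₂ t - p₁ t) * (1 - u t) * I t)) t)
    (hp₂ : ∀ t ∈ J, HasDerivAt p₂ (-(β * (p₂ t - p₁ t) * (1 - u t) * S t) + γ * p₂ t) t)
    (hSpos : ∀ t ∈ J, 0 < S t) (hIpos : ∀ t ∈ J, 0 < I t) (hp₁neg : ∀ t ∈ J, p₁ t < 0) :
    StrictAntiOn (fun t => β * S t * I t * (p₂ t - p₁ t)) J := by
  have hψ : ∀ t ∈ J, HasDerivAt (fun t => β * S t * I t * (p₂ t - p₁ t))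
      (β * γ * S t * I t * p₁ t) t := fun t ht =>
    hasDerivAt_switching (hS t ht) (hI t ht) (hp₁ t ht) (hp₂ t ht)
  refine strictAntiOn_of_deriv_neg hJ (fun t ht => (hψ t ht).continuousAt.continuousWithinAt)
    fun t ht => ?_
  have ht' := interior_subset ht
  rw [(hψ t ht').deriv]
  have := mul_pos (mul_pos (mul_pos hβ hγ) (hSpos t ht')) (hIpos t ht')
  exact mul_neg_of_pos_of_neg this (hp₁neg t ht')

theorem sir_pos {β γ T : ℝ} {u S I : ℝ → ℝ} (hT : 0 ≤ T) (hu : Continuous u)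
    (hS : ∀ t ∈ Icc 0 T, HasDerivAt S (-(β * (1 - u t) * S t * I t)) t)
    (hI : ∀ t ∈ Icc 0 T, HasDerivAt I (β * (1 - u t) * S t * I t - γ * I t) t)
    (hS0 : 0 < S 0) (hI0 : 0 < I 0) :
    ∀ t ∈ Icc 0 T, 0 < S t ∧ 0 < I t := by
  have hβu : Continuous fun t => β * (1 - u t) := by fun_prop
  refine fun t ht => ⟨?_, ?_⟩
  · exact pos_of_hasDerivAt_mul_self (f := fun t => -(β * (1 - u t) * I t)) hT
      (fun t ht => (hβu.continuousAt.mul (hI t ht).continuousAt).neg.continuousWithinAt)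
      (fun t ht => (hS t ht).congr_deriv (by ring)) hS0 t ht
  · exact pos_of_hasDerivAt_mul_self (f := fun t => β * (1 - u t) * S t - γ) hT
      (fun t ht => ((hβu.continuousAt.mul (hS t ht).continuousAt).sub
        continuousAt_const).continuousWithinAt)
      (fun t ht => (hI t ht).congr_deriv (by ring)) hI0 t ht

theorem optimal_control_eventually_decreasing_general
    (T β γ lam : ℝ) (hT : 0 < T) (hβ : 0 < β) (hγ : 0 < γ) (hlam : 0 < lam)
    (c : ℝ → ℝ) (V : Set ℝ) (hV : IsOpen V) (hV01 : Set.Ico (0:ℝ) 1 ⊆ V)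
    (hc : ContDiffOn ℝ 2 c V)
    (hc'' : ∀ v ∈ V, 0 < deriv (deriv c) v)
    (hc'0 : deriv c 0 = 0)
    (u S I : ℝ → ℝ)
    (hu_cont : Continuous u)
    (hu_range : ∀ t ∈ Set.Icc 0 T, 0 ≤ u t ∧ u t < 1)
    (hS0 : 0 < S 0) (hI0 : 0 < I 0)
    (hS : ∀ t ∈ Set.Icc 0 T, HasDerivAt S (-(β * (1 - u t) * S t * I t)) t)
    (hI : ∀ t ∈ Set.Icc 0 T, HasDerivAt I (β * (1 - u t) * S t * I t - γ * I t) t)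
    (p₁ p₂ : ℝ → ℝ)
    (hp₁ : ∀ t ∈ Set.Icc 0 T,
      HasDerivAt p₁ (-(β * (p₂ t - p₁ t) * (1 - u t) * I t)) t)
    (hp₂ : ∀ t ∈ Set.Icc 0 T,
      HasDerivAt p₂ (-(β * (p₂ t - p₁ t) * (1 - u t) * S t) + γ * p₂ t) t)
    (hp₁T : p₁ T = -1) (hp₂T : p₂ T = 0)
    (q : ℝ → ℝ)
    (hkkt_stat : ∀ t ∈ Set.Icc 0 T,
      lam * deriv c (u t) + β * S t * I t * (p₁ t - p₂ t) - q t = 0)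
    (hq_nonneg : ∀ t ∈ Set.Icc 0 T, 0 ≤ q t)
    (hcs : ∀ t ∈ Set.Icc 0 T, q t * u t = 0) :
    ∃ τ, 0 ≤ τ ∧ τ < T ∧
      (∀ t₁ ∈ Set.Icc τ T, ∀ t₂ ∈ Set.Icc τ T, t₁ < t₂ → u t₂ < u t₁) ∧
      (∀ t ∈ Set.Icc τ T, DifferentiableAt ℝ u t → deriv u t ≤ 0) := by
  have hT_mem : T ∈ Icc 0 T := right_mem_Icc.mpr hT.le
  have hSI := sir_pos hT.le hu_cont hS hI hS0 hI0
  have huT : 0 < u T := by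
    refine (hu_range T hT_mem).1.lt_of_ne' fun huT => ?_
    have hstat := hkkt_stat T hT_mem
    rw [huT, hc'0, hp₁T, hp₂T] at hstat
    nlinarith [hq_nonneg T hT_mem, mul_pos (hSI T hT_mem).1 (hSI T hT_mem).2]
  have hp₁_near : ∀ᶠ t in 𝓝 T, p₁ t < 0 :=
    (hp₁ T hT_mem).continuousAt.eventually_lt continuousAt_const (by linarith)
  have hu_near : ∀ᶠ t in 𝓝 T, 0 < u t := continuousAt_const.eventually_lt hu_cont.continuousAt huT
  have hnear : ∀ᶠ t in 𝓝[≤] T, 0 ≤ t ∧ p₁ t < 0 ∧ 0 < u t := nhdsWithin_le_nhds <|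
    (le_mem_nhds hT).and (hp₁_near.and hu_near)
  obtain ⟨τ, hτT, hτ⟩ := mem_nhdsLE_iff_exists_Icc_subset.mp hnear
  have hτ0 : 0 ≤ τ := (hτ (left_mem_Icc.mpr hτT.le)).1
  have hsub : Icc τ T ⊆ Icc 0 T := Icc_subset_Icc hτ0 le_rfl
  have hψ := strictAntiOn_switching hβ hγ (convex_Icc τ T) (fun t ht => hS t (hsub ht))
    (fun t ht => hI t (hsub ht)) (fun t ht => hp₁ t (hsub ht)) (fun t ht => hp₂ t (hsub ht))
    (fun t ht => (hSI t (hsub ht)).1) (fun t ht => (hSI t (hsub ht)).2) fun t ht => (hτ ht).2.1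
  have hkkt : ∀ t ∈ Icc τ T, lam * deriv c (u t) = β * S t * I t * (p₂ t - p₁ t) := by
    intro t ht
    have hq : q t = 0 := (mul_eq_zero.mp (hcs t (hsub ht))).resolve_right (hτ ht).2.2.ne'
    linarith [hkkt_stat t (hsub ht)]
  have hu_anti : StrictAntiOn u (Icc τ T) :=
    (strictMonoOn_deriv_of_deriv_deriv_pos hV (convex_Ico 0 1) hV01 hc hc'').strictAntiOn_of_comp
      (fun t ht => hu_range t (hsub ht)) fun t₁ ht₁ t₂ ht₂ hlt => by
        have hlt' : lam * deriv c (u t₂) < lam * deriv c (u t₁) := by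
          rw [hkkt t₁ ht₁, hkkt t₂ ht₂]
          exact hψ ht₁ ht₂ hlt
        exact lt_of_mul_lt_mul_left hlt' hlam.le
  exact ⟨τ, hτ0, hτT, fun t₁ ht₁ t₂ ht₂ => hu_anti ht₁ ht₂,
    fun t ht => deriv_nonpos_of_antitoneOn_Icc hτT hu_anti.antitoneOn ht⟩

/-- (Theorem 3.1) Under the KKT conditions for the optimal control problem of the
controlled SIR model, there exists `τ ∈ [0,T)` such that the optimal control `u`
is strictly decreasing on `[τ,T]`; consequently `u' ≤ 0` wherever `u` is
differentiable on `[τ,T]`. -/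
theorem optimal_control_eventually_decreasing
    (T β γ lam : ℝ) (hT : 0 < T) (hβ : 0 < β) (hγ : 0 < γ) (hlam : 0 < lam)
    (c : ℝ → ℝ) (V : Set ℝ) (hV : IsOpen V) (hV01 : Set.Ico (0:ℝ) 1 ⊆ V)
    (hc : ContDiffOn ℝ 2 c V)
    (hc'' : ∀ v ∈ V, 0 < deriv (deriv c) v)
    (hc0 : c 0 = 0) (hc'0 : deriv c 0 = 0)
    (hc'pos : ∀ v ∈ V, 0 < v → 0 < deriv c v)
    (hc'neg : ∀ v ∈ V, v < 0 → deriv c v < 0)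
    (hc_blowup : Filter.Tendsto c (nhdsWithin 1 (Set.Iio 1)) Filter.atTop)
    (u S I R : ℝ → ℝ)
    (hu_cont : Continuous u)
    (hu_range : ∀ t ∈ Set.Icc 0 T, 0 ≤ u t ∧ u t < 1)
    (hS0 : 0 < S 0) (hI0 : 0 < I 0)
    (hS : ∀ t ∈ Set.Icc 0 T, HasDerivAt S (-(β * (1 - u t) * S t * I t)) t)
    (hI : ∀ t ∈ Set.Icc 0 T, HasDerivAt I (β * (1 - u t) * S t * I t - γ * I t) t)
    (hR : ∀ t ∈ Set.Icc 0 T, HasDerivAt R (γ * I t) t)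
    (p₁ p₂ : ℝ → ℝ)
    (hp₁ : ∀ t ∈ Set.Icc 0 T,
      HasDerivAt p₁ (-(β * (p₂ t - p₁ t) * (1 - u t) * I t)) t)
    (hp₂ : ∀ t ∈ Set.Icc 0 T,
      HasDerivAt p₂ (-(β * (p₂ t - p₁ t) * (1 - u t) * S t) + γ * p₂ t) t)
    (hp₁T : p₁ T = -1) (hp₂T : p₂ T = 0)
    (q : ℝ → ℝ)
    (hkkt_stat : ∀ t ∈ Set.Icc 0 T,
      lam * deriv c (u t) + β * S t * I t * (p₁ t - p₂ t) - q t = 0)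
    (hq_nonneg : ∀ t ∈ Set.Icc 0 T, 0 ≤ q t)
    (hu_nonneg : ∀ t ∈ Set.Icc 0 T, 0 ≤ u t)
    (hcs : ∀ t ∈ Set.Icc 0 T, q t * u t = 0) :
    ∃ τ, 0 ≤ τ ∧ τ < T ∧
      (∀ t₁ ∈ Set.Icc τ T, ∀ t₂ ∈ Set.Icc τ T, t₁ < t₂ → u t₂ < u t₁) ∧
      (∀ t ∈ Set.Icc τ T, DifferentiableAt ℝ u t → deriv u t ≤ 0) :=
  optimal_control_eventually_decreasing_general T β γ lam hT hβ hγ hlam c V hV hV01 hc hc'' hc'0 u S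
    I hu_cont hu_range hS0 hI0 hS hI p₁ p₂ hp₁ hp₂ hp₁T hp₂T q hkkt_stat hq_nonneg hcs
end

section
/- (Terminal sign of the stationarity term) There exists τ ∈ [0,T) such that for all t ∈ [τ,T], p₁(t) < 0 and −β·S(t)·I(t)·(p₁(t) − p₂(t)) > 0. -/
/-!
`S` and `I` solve linear equations `f' = c f` with continuous coefficients, so
`f · exp (-∫ c)` is constant and they stay positive on `[0, T]`. At `T` we have `p₁ = -1 < 0`
and `p₂ - p₁ = 1 > 0`; by continuity both persist on some `[τ, T]`, where then
`-β S I (p₁ - p₂) = β S I (p₂ - p₁) > 0`.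
-/

open Set Filter Topology

theorem pos_on_Icc_of_hasDerivAt_mul {a b : ℝ} {f c : ℝ → ℝ} (hc : ContinuousOn c (Icc a b))
    (hf : ∀ t ∈ Icc a b, HasDerivAt f (c t * f t) t) (hfa : 0 < f a) :
    ∀ t ∈ Icc a b, 0 < f t := by
  intro t ht
  have hab : a ≤ b := ht.1.trans ht.2
  -- `c ∘ projIcc` extends `c` continuously to `ℝ`, so `G` is an antiderivative of `c` on `[a, b]`
  set G : ℝ → ℝ := fun t => ∫ s in a..t, c (projIcc a b hab s)
  have hG : ∀ t ∈ Icc a b, HasDerivAt G (c t) t := fun t ht => by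
    have hcont : Continuous fun s => c (projIcc a b hab s) :=
      hc.comp_continuous (continuous_subtype_val.comp continuous_projIcc) fun s =>
        (projIcc a b hab s).2
    simpa [projIcc_of_mem hab ht] using (hcont.integral_hasStrictDerivAt a t).hasDerivAt
  have hF : ∀ t ∈ Icc a b, HasDerivAt (fun s => f s * Real.exp (-G s)) 0 t := fun t ht => by
    have hexp : HasDerivAt (fun s => Real.exp (-G s)) (Real.exp (-G t) * -c t) t :=
      (hG t ht).neg.exp
    exact ((hf t ht).mul hexp).congr_deriv (by ring)
  have hFconst := constant_of_has_deriv_right_zero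
    (fun t ht => (hF t ht).continuousAt.continuousWithinAt)
    (fun t ht => (hF t (Ico_subset_Icc_self ht)).hasDerivWithinAt) t ht
  have hFt : 0 < f t * Real.exp (-G t) := by
    rw [hFconst]
    positivity
  exact pos_of_mul_pos_left hFt (Real.exp_pos _).le

theorem exists_Icc_forall_of_eventually_nhds {a b : ℝ} {p : ℝ → Prop} (hab : a < b)
    (hp : ∀ᶠ t in 𝓝 b, p t) : ∃ τ, a ≤ τ ∧ τ < b ∧ ∀ t ∈ Icc τ b, p t := by
  obtain ⟨l, hlb, hl⟩ := mem_nhdsLE_iff_exists_Icc_subset.mp (nhdsWithin_le_nhds hp)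
  exact ⟨max a l, le_max_left _ _, max_lt hab hlb,
    fun t ht => hl ⟨(le_max_right _ _).trans ht.1, ht.2⟩⟩

theorem terminal_sign_of_stationarity_term_general
    (T β γ : ℝ) (hT : 0 < T) (hβ : 0 < β)
    (u S I : ℝ → ℝ)
    (hu_cont : Continuous u)
    (hS0 : 0 < S 0) (hI0 : 0 < I 0)
    (hS : ∀ t ∈ Set.Icc 0 T, HasDerivAt S (-(β * (1 - u t) * S t * I t)) t)
    (hI : ∀ t ∈ Set.Icc 0 T, HasDerivAt I (β * (1 - u t) * S t * I t - γ * I t) t)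
    (p₁ p₂ : ℝ → ℝ)
    (hp₁ : ∀ t ∈ Set.Icc 0 T,
      HasDerivAt p₁ (-(β * (p₂ t - p₁ t) * (1 - u t) * I t)) t)
    (hp₂ : ∀ t ∈ Set.Icc 0 T,
      HasDerivAt p₂ (-(β * (p₂ t - p₁ t) * (1 - u t) * S t) + γ * p₂ t) t)
    (hp₁T : p₁ T = -1) (hp₂T : p₂ T = 0) :
    ∃ τ, 0 ≤ τ ∧ τ < T ∧
      ∀ t ∈ Set.Icc τ T, p₁ t < 0 ∧ 0 < -(β * S t * I t * (p₁ t - p₂ t)) := by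
  have hScont : ContinuousOn S (Icc 0 T) :=
    continuousOn_of_forall_continuousAt fun t ht => (hS t ht).continuousAt
  have hIcont : ContinuousOn I (Icc 0 T) :=
    continuousOn_of_forall_continuousAt fun t ht => (hI t ht).continuousAt
  have hSpos : ∀ t ∈ Icc 0 T, 0 < S t :=
    pos_on_Icc_of_hasDerivAt_mul (c := fun t => -(β * (1 - u t) * I t))
      (by fun_prop) (fun t ht => (hS t ht).congr_deriv (by ring)) hS0
  have hIpos : ∀ t ∈ Icc 0 T, 0 < I t :=
    pos_on_Icc_of_hasDerivAt_mul (c := fun t => β * (1 - u t) * S t - γ)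
      (by fun_prop) (fun t ht => (hI t ht).congr_deriv (by ring)) hI0
  have hTmem : T ∈ Icc 0 T := right_mem_Icc.mpr hT.le
  have hp₁_neg : ∀ᶠ t in 𝓝 T, p₁ t < 0 :=
    (hp₁ T hTmem).continuousAt.eventually_lt continuousAt_const (by rw [hp₁T]; norm_num)
  have hp₂_sub_pos : ∀ᶠ t in 𝓝 T, 0 < p₂ t - p₁ t :=
    continuousAt_const.eventually_lt ((hp₂ T hTmem).continuousAt.sub (hp₁ T hTmem).continuousAt)
      (by rw [hp₁T, hp₂T]; norm_num)
  obtain ⟨τ, hτ0, hτT, hτ⟩ := exists_Icc_forall_of_eventually_nhds hT (hp₁_neg.and hp₂_sub_pos)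
  refine ⟨τ, hτ0, hτT, fun t ht => ⟨(hτ t ht).1, ?_⟩⟩
  have ht0 : t ∈ Icc 0 T := ⟨hτ0.trans ht.1, ht.2⟩
  have hprod := mul_pos (mul_pos (mul_pos hβ (hSpos t ht0)) (hIpos t ht0)) (hτ t ht).2
  linarith

/-- (Terminal sign of the stationarity term) There exists `τ ∈ [0,T)` such that
for all `t ∈ [τ,T]`, `p₁(t) < 0` and `−β·S(t)·I(t)·(p₁(t) − p₂(t)) > 0`. -/
theorem terminal_sign_of_stationarity_term
    (T β γ : ℝ) (hT : 0 < T) (hβ : 0 < β) (hγ : 0 < γ)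
    (u S I R : ℝ → ℝ)
    (hu_cont : Continuous u)
    (hu_range : ∀ t ∈ Set.Icc 0 T, 0 ≤ u t ∧ u t < 1)
    (hS0 : 0 < S 0) (hI0 : 0 < I 0)
    (hS : ∀ t ∈ Set.Icc 0 T, HasDerivAt S (-(β * (1 - u t) * S t * I t)) t)
    (hI : ∀ t ∈ Set.Icc 0 T, HasDerivAt I (β * (1 - u t) * S t * I t - γ * I t) t)
    (hR : ∀ t ∈ Set.Icc 0 T, HasDerivAt R (γ * I t) t)
    (p₁ p₂ : ℝ → ℝ)
    (hp₁ : ∀ t ∈ Set.Icc 0 T,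
      HasDerivAt p₁ (-(β * (p₂ t - p₁ t) * (1 - u t) * I t)) t)
    (hp₂ : ∀ t ∈ Set.Icc 0 T,
      HasDerivAt p₂ (-(β * (p₂ t - p₁ t) * (1 - u t) * S t) + γ * p₂ t) t)
    (hp₁T : p₁ T = -1) (hp₂T : p₂ T = 0) :
    ∃ τ, 0 ≤ τ ∧ τ < T ∧
      ∀ t ∈ Set.Icc τ T, p₁ t < 0 ∧ 0 < -(β * S t * I t * (p₁ t - p₂ t)) :=
  terminal_sign_of_stationarity_term_general T β γ hT hβ u S I hu_cont hS0 hI0 hS hI p₁ p₂ hp₁ hp₂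
    hp₁T hp₂T
end
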